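/- Let k be a field, A = k[x,y], and let α ∈ k with α ≠ 0 and α ≠ 1. Define the A-linear map φ : A^4 → A^2 by φ(e_1) = (y^3, 0), φ(e_2) = (0, x·y^2), φ(e_3) = (−x^2·y, x^2·y), φ(e_4) = (−x^3, α·x^3). Then the kernel of φ is exactly the A-submodule of A^4 generated by the two elements s_1 = (x^2, −x·y, y^2, 0) and s_2 = (0, (1−α)·x^2, −x·y, y^2). -/

import Mathlib

open MvPolynomial

noncomputable section

variable (k : Type) [Field k]

/-- `A = k[x,y]`. -/
abbrev A2 (k : Type) [Field k] := MvPolynomial (Fin 2) k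

/-- The map `φ : A⁴ → A²` with `φ(e₁) = (y³, 0)`, `φ(e₂) = (0, x·y²)`,
`φ(e₃) = (−x²·y, x²·y)`, `φ(e₄) = (−x³, α·x³)`. -/
def phiMatrix (α : k) : Matrix (Fin 2) (Fin 4) (A2 k) :=
  Matrix.of
    ![![(X 1)^3, 0, -((X 0)^2 * X 1), -(X 0)^3],
      ![0, X 0 * (X 1)^2, (X 0)^2 * X 1, C α * (X 0)^3]]

/-- `s₁ = (x², −x·y, y², 0)`. -/
def syz₁ : Fin 4 → A2 k := ![(X 0)^2, -(X 0 * X 1), (X 1)^2, 0]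

/-- `s₂ = (0, (1−α)·x², −x·y, y²)`. -/
def syz₂ (α : k) : Fin 4 → A2 k := ![0, (1 - C α) * (X 0)^2, -(X 0 * X 1), (X 1)^2]

/-! Since `x` and `y` are relatively prime in the UFD `k[x,y]`, the first row
`y³v₀ = x²(y v₂ + x v₃)` forces `v₀ = x²a`, then `v₃ = y d` and `v₂ = y²a − x d`.
Substituting into the second row and dividing by `xy` leaves
`y v₁ = −x y² a + (1 − α) x² d`; as `1 − α` is a unit, `y` divides `d = y b`, and then `v = a s₁ + b s₂`. -/

section RelPrime

variable {R : Type*} [CommRing R] [IsDomain R] [DecompositionMonoid R] {x y : R}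

theorem exists_of_first_relation (hxy : IsRelPrime x y) (hx : x ≠ 0) (hy : y ≠ 0)
    {v₀ v₂ v₃ : R} (h : y ^ 3 * v₀ - x ^ 2 * y * v₂ - x ^ 3 * v₃ = 0) :
    ∃ a d, v₀ = x ^ 2 * a ∧ v₂ = y ^ 2 * a - x * d ∧ v₃ = y * d := by
  obtain ⟨a, rfl⟩ : x ^ 2 ∣ v₀ :=
    (hxy.pow (m := 2) (n := 3)).dvd_of_dvd_mul_left
      ⟨y * v₂ + x * v₃, by linear_combination h⟩
  have h' : y * (y ^ 2 * a - v₂) = x * v₃ :=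
    mul_left_cancel₀ (pow_ne_zero 2 hx) (by linear_combination h)
  obtain ⟨d, rfl⟩ : y ∣ v₃ := hxy.symm.dvd_of_dvd_mul_left ⟨_, h'.symm⟩
  refine ⟨a, d, rfl, ?_, rfl⟩
  have : y * (y ^ 2 * a - v₂) = y * (x * d) := by linear_combination h'
  linear_combination -(mul_left_cancel₀ hy this)

theorem exists_of_second_relation (hxy : IsRelPrime x y) {c : R} (hc : IsRelPrime y c)
    (hy : y ≠ 0) {v₁ a d : R} (h : y * v₁ + x * y ^ 2 * a + c * x ^ 2 * d = 0) :
    ∃ b, d = y * b ∧ v₁ = -(x * y) * a - c * x ^ 2 * b := by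
  obtain ⟨b, rfl⟩ : y ∣ d := (hc.mul_right (hxy.symm.pow_right (n := 2))).dvd_of_dvd_mul_left
    ⟨-v₁ - x * y * a, by linear_combination h⟩
  exact ⟨b, rfl, mul_left_cancel₀ hy (by linear_combination h)⟩

end RelPrime

theorem mem_ker_phiMatrix_iff {α : k} {v : Fin 4 → A2 k} :
    v ∈ LinearMap.ker (Matrix.toLin' (phiMatrix k α)) ↔
      X 1 ^ 3 * v 0 - X 0 ^ 2 * X 1 * v 2 - X 0 ^ 3 * v 3 = 0 ∧
        X 0 * X 1 ^ 2 * v 1 + X 0 ^ 2 * X 1 * v 2 + C α * X 0 ^ 3 * v 3 = 0 := by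
  rw [LinearMap.mem_ker, Matrix.toLin'_apply, funext_iff, Fin.forall_fin_two]
  simp [phiMatrix, Matrix.mulVec, dotProduct, Fin.sum_univ_four, sub_eq_add_neg]

theorem syz₁_mem_ker_phiMatrix (α : k) :
    syz₁ k ∈ LinearMap.ker (Matrix.toLin' (phiMatrix k α)) := by
  rw [mem_ker_phiMatrix_iff]
  constructor <;> simp [syz₁] <;> ring

theorem syz₂_mem_ker_phiMatrix (α : k) :
    syz₂ k α ∈ LinearMap.ker (Matrix.toLin' (phiMatrix k α)) := by
  rw [mem_ker_phiMatrix_iff]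
  constructor <;> simp [syz₂] <;> ring

theorem isRelPrime_X_zero_X_one : IsRelPrime (X 0 : A2 k) (X 1) :=
  X_prime.irreducible.isRelPrime_iff_not_dvd.2 (by simp)

theorem ker_phi_eq_span (α : k) (hα1 : α ≠ 1) :
    LinearMap.ker (Matrix.toLin' (phiMatrix k α)) =
      Submodule.span (A2 k) {syz₁ k, syz₂ k α} := by
  refine le_antisymm (fun v hv => ?_) (Submodule.span_le.2
    (Set.pair_subset (syz₁_mem_ker_phiMatrix k α) (syz₂_mem_ker_phiMatrix k α)))
  obtain ⟨h₀, h₁⟩ := (mem_ker_phiMatrix_iff k).1 hv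
  have hxy := isRelPrime_X_zero_X_one k
  have hx : (X 0 : A2 k) ≠ 0 := X_ne_zero 0
  have hy : (X 1 : A2 k) ≠ 0 := X_ne_zero 1
  obtain ⟨a, d, hv₀, hv₂, hv₃⟩ := exists_of_first_relation hxy hx hy h₀
  have hc : IsRelPrime (X 1 : A2 k) (C α - 1) := by
    rw [← C_1, ← C_sub]
    exact ((sub_ne_zero.2 hα1).isUnit.map C).isRelPrime_right
  have h₁' : X 1 * v 1 + X 0 * X 1 ^ 2 * a + (C α - 1) * X 0 ^ 2 * d = 0 :=
    mul_left_cancel₀ (mul_ne_zero hx hy) (by rw [hv₂, hv₃] at h₁; linear_combination h₁)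
  obtain ⟨b, rfl, hv₁⟩ := exists_of_second_relation hxy hc hy h₁'
  refine Submodule.mem_span_pair.2 ⟨a, b, funext fun i => ?_⟩
  fin_cases i <;> simp [syz₁, syz₂, hv₀, hv₁, hv₂, hv₃] <;> ring

end
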